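/- arXiv:2005.01345 — 2 statements merged into one kernel-verified Lean document; each statement's English description precedes it below -/
import Mathlib

section
/- Let d ∈ ℕ, let ξ : ℝ → ℝ^d be a function, and let (τ̃_z)_{z∈ℕ} be a sequence of times with τ̃_0 = 0 and 0 < h̲ ≤ τ̃_{z+1} − τ̃_z ≤ h̄ for all z ∈ ℕ. Let V_n : ℝ^d → ℝ be a continuous function with V_n(0) = 0 and V_n(ξ) > 0 for ξ ≠ 0, and suppose there are class K∞ functions α₁, α₂ and class K functions α₃, α₄ such that: (i) α₁(‖ξ‖) ≤ V_n(ξ) ≤ α₂(‖ξ‖) for all ξ ∈ ℝ^d; (ii) V_n(ξ(τ̃_z + r)) ≤ α₃(V_n(ξ(τ̃_z))) for all z ∈ ℕ and all 0 ≤ r < τ̃_{z+1} − τ̃_z; (iii) (V_n(ξ(τ̃_{z+1})) − V_n(ξ(τ̃_z)))/(τ̃_{z+1} − τ̃_z) ≤ −α₄(V_n(ξ(τ̃_z))) for all z ∈ ℕ. Then ‖ξ(t)‖ → 0 as t → ∞. -/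
/-- A function is of class K if it is continuous, strictly increasing and vanishes at 0
(all on the nonnegative half-line). -/
def IsClassK (α : ℝ → ℝ) : Prop :=
  ContinuousOn α (Set.Ici 0) ∧ StrictMonoOn α (Set.Ici 0) ∧ α 0 = 0

/-- A function is of class K∞ if it is of class K and unbounded. -/
def IsClassKInf (α : ℝ → ℝ) : Prop :=
  IsClassK α ∧ Filter.Tendsto α Filter.atTop Filter.atTop

/-!
Condition (iii) makes the sampled values `V (ξ (τ z))` drop by at least `h̲ · α₄ (V (ξ (τ z)))` at
every step, so they tend to `0`. Between two sampling times, condition (ii) bounds `V (ξ t)` by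
`α₃` of the preceding sample, hence `V (ξ t) → 0`, and `α₁ ‖ξ t‖ ≤ V (ξ t)` with `α₁` of class K
forces `‖ξ t‖ → 0`.
-/

open Filter Set Topology

namespace IsClassK

variable {α : ℝ → ℝ}

theorem nonneg (hα : IsClassK α) {s : ℝ} (hs : 0 ≤ s) : 0 ≤ α s :=
  hα.2.2 ▸ hα.2.1.monotoneOn self_mem_Ici hs hs

theorem pos (hα : IsClassK α) {s : ℝ} (hs : 0 < s) : 0 < α s :=
  hα.2.2 ▸ hα.2.1 self_mem_Ici hs.le hs

theorem tendsto_comp_zero {ι : Type*} {l : Filter ι} {u : ι → ℝ} (hα : IsClassK α)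
    (hu : Tendsto u l (𝓝 0)) (hu0 : ∀ i, 0 ≤ u i) : Tendsto (fun i => α (u i)) l (𝓝 0) := by
  have hu' : Tendsto u l (𝓝[Ici 0] 0) :=
    tendsto_nhdsWithin_of_tendsto_nhds_of_eventually_within u hu (Eventually.of_forall hu0)
  have := (hα.1 0 self_mem_Ici).tendsto.comp hu'
  rwa [hα.2.2] at this

theorem tendsto_zero_of_tendsto_comp {ι : Type*} {l : Filter ι} {u : ι → ℝ} (hα : IsClassK α)
    (hαu : Tendsto (fun i => α (u i)) l (𝓝 0)) (hu0 : ∀ i, 0 ≤ u i) : Tendsto u l (𝓝 0) := by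
  refine Metric.tendsto_nhds.2 fun ε hε => ?_
  filter_upwards [hαu.eventually (gt_mem_nhds (hα.pos hε))] with i hi
  rw [Real.dist_0_eq_abs, abs_of_nonneg (hu0 i)]
  exact (hα.2.1.lt_iff_lt (hu0 i) hε.le).1 hi

end IsClassK

/-- A positive limit `L` would force a decrease of at least `c * β L` per step. -/
theorem tendsto_zero_of_succ_le_sub {v : ℕ → ℝ} {β : ℝ → ℝ} {c : ℝ} (hc : 0 < c)
    (hβ : IsClassK β) (hv0 : ∀ n, 0 ≤ v n) (hstep : ∀ n, v (n + 1) ≤ v n - c * β (v n)) :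
    Tendsto v atTop (𝓝 0) := by
  have hanti : Antitone v := antitone_nat_of_succ_le fun n => by
    nlinarith [hstep n, hβ.nonneg (hv0 n)]
  have hbdd : BddBelow (range v) := ⟨0, by rintro _ ⟨n, rfl⟩; exact hv0 n⟩
  set L := ⨅ n, v n
  have hL0 : 0 ≤ L := le_ciInf hv0
  suffices hL : L = 0 from hL ▸ tendsto_atTop_ciInf hanti hbdd
  by_contra hne
  have hβL : 0 < c * β L := mul_pos hc (hβ.pos (lt_of_le_of_ne hL0 (Ne.symm hne)))
  have hdecay : ∀ n : ℕ, v n ≤ v 0 - n * (c * β L) := by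
    intro n
    induction n with
    | zero => simp
    | succ n ih =>
      have : β L ≤ β (v n) := hβ.2.1.monotoneOn hL0 (hv0 n) (ciInf_le hbdd n)
      push_cast
      nlinarith [hstep n]
  obtain ⟨n, hn⟩ := exists_nat_gt (v 0 / (c * β L))
  rw [div_lt_iff₀ hβL] at hn
  linarith [hdecay n, hv0 n]

theorem tendsto_atTop_of_le_sub {τ : ℕ → ℝ} {c : ℝ} (hc : 0 < c)
    (hgap : ∀ n, c ≤ τ (n + 1) - τ n) : Tendsto τ atTop atTop := by
  have hlin : ∀ n : ℕ, τ 0 + n * c ≤ τ n := by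
    intro n
    induction n with
    | zero => simp
    | succ n ih => push_cast; linarith [hgap n]
  refine tendsto_atTop_mono hlin (tendsto_atTop_add_const_left _ _ ?_)
  exact tendsto_natCast_atTop_atTop.atTop_mul_const hc

theorem exists_interval_index {τ : ℕ → ℝ} (hτ : Monotone τ) (htop : Tendsto τ atTop atTop) :
    ∃ k : ℝ → ℕ, Tendsto k atTop atTop ∧ ∀ t, τ 0 ≤ t → τ (k t) ≤ t ∧ t < τ (k t + 1) := by
  classical
  have hex : ∀ t, ∃ n, t < τ (n + 1) := fun t =>
    ((tendsto_add_atTop_iff_nat 1).2 htop).eventually_gt_atTop t |>.exists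
  refine ⟨fun t => Nat.find (hex t), ?_, fun t ht => ⟨?_, Nat.find_spec (hex t)⟩⟩
  · refine tendsto_atTop_atTop.2 fun N => ⟨τ N, fun t ht => ?_⟩
    by_contra! hlt
    exact (Nat.find_spec (hex t)).not_ge (ht.trans' (hτ hlt))
  · show τ (Nat.find (hex t)) ≤ t
    rcases h : Nat.find (hex t) with _ | n
    · exact ht
    · exact not_lt.1 (Nat.find_min (hex t) (by omega : n < Nat.find (hex t)))

theorem stmt_1_general (d : ℕ) (ξ : ℝ → EuclideanSpace ℝ (Fin d))
    (τ : ℕ → ℝ) (hlow hbar : ℝ) (hhlow : 0 < hlow)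
    (hgap : ∀ z : ℕ, hlow ≤ τ (z + 1) - τ z ∧ τ (z + 1) - τ z ≤ hbar)
    (Vn : EuclideanSpace ℝ (Fin d) → ℝ)
    (α₁ α₂ α₃ α₄ : ℝ → ℝ)
    (hα₁ : IsClassKInf α₁)
    (hα₃ : IsClassK α₃) (hα₄ : IsClassK α₄)
    (hbound : ∀ x, α₁ ‖x‖ ≤ Vn x ∧ Vn x ≤ α₂ ‖x‖)
    (hii : ∀ z : ℕ, ∀ r : ℝ, 0 ≤ r → r < τ (z + 1) - τ z →
      Vn (ξ (τ z + r)) ≤ α₃ (Vn (ξ (τ z))))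
    (hiii : ∀ z : ℕ,
      (Vn (ξ (τ (z + 1))) - Vn (ξ (τ z))) / (τ (z + 1) - τ z) ≤ -α₄ (Vn (ξ (τ z)))) :
    Filter.Tendsto (fun t : ℝ => ‖ξ t‖) Filter.atTop (nhds 0) := by
  have hα₁0 : ∀ x : EuclideanSpace ℝ (Fin d), 0 ≤ α₁ ‖x‖ := fun x => hα₁.1.nonneg (norm_nonneg x)
  have hV0 : ∀ x, 0 ≤ Vn x := fun x => (hα₁0 x).trans (hbound x).1
  have hstep : ∀ z, Vn (ξ (τ (z + 1))) ≤ Vn (ξ (τ z)) - hlow * α₄ (Vn (ξ (τ z))) := fun z => by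
    have hτ_pos := hhlow.trans_le (hgap z).1
    have := (div_le_iff₀ hτ_pos).1 (hiii z)
    nlinarith [(hgap z).1, hα₄.nonneg (hV0 (ξ (τ z)))]
  have hsample : Tendsto (fun z => Vn (ξ (τ z))) atTop (𝓝 0) :=
    tendsto_zero_of_succ_le_sub hhlow hα₄ (fun z => hV0 _) hstep
  have htop := tendsto_atTop_of_le_sub hhlow fun z => (hgap z).1
  have hmono : Monotone τ := monotone_nat_of_le_succ fun z => by linarith [(hgap z).1]
  obtain ⟨k, hk, hkτ⟩ := exists_interval_index hmono htop
  have hupper : ∀ᶠ t in atTop, Vn (ξ t) ≤ α₃ (Vn (ξ (τ (k t)))) := by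
    filter_upwards [eventually_ge_atTop (τ 0)] with t ht
    obtain ⟨hlo, hhi⟩ := hkτ t ht
    simpa using hii (k t) (t - τ (k t)) (by linarith) (by linarith)
  have hα₃lim := (hα₃.tendsto_comp_zero hsample fun z => hV0 _).comp hk
  refine hα₁.1.tendsto_zero_of_tendsto_comp ?_ fun t => norm_nonneg _
  exact tendsto_of_tendsto_of_tendsto_of_le_of_le' tendsto_const_nhds hα₃lim
    (Eventually.of_forall fun t => hα₁0 _)
    (hupper.mono fun t ht => (hbound _).1.trans ht)

/-- Attractivity part of Proposition 1. -/
theorem stmt_1 (d : ℕ) (ξ : ℝ → EuclideanSpace ℝ (Fin d))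
    (τ : ℕ → ℝ) (hlow hbar : ℝ) (hτ0 : τ 0 = 0) (hhlow : 0 < hlow)
    (hgap : ∀ z : ℕ, hlow ≤ τ (z + 1) - τ z ∧ τ (z + 1) - τ z ≤ hbar)
    (Vn : EuclideanSpace ℝ (Fin d) → ℝ) (hVcont : Continuous Vn)
    (hV0 : Vn 0 = 0) (hVpos : ∀ x, x ≠ 0 → 0 < Vn x)
    (α₁ α₂ α₃ α₄ : ℝ → ℝ)
    (hα₁ : IsClassKInf α₁) (hα₂ : IsClassKInf α₂)
    (hα₃ : IsClassK α₃) (hα₄ : IsClassK α₄)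
    (hbound : ∀ x, α₁ ‖x‖ ≤ Vn x ∧ Vn x ≤ α₂ ‖x‖)
    (hii : ∀ z : ℕ, ∀ r : ℝ, 0 ≤ r → r < τ (z + 1) - τ z →
      Vn (ξ (τ z + r)) ≤ α₃ (Vn (ξ (τ z))))
    (hiii : ∀ z : ℕ,
      (Vn (ξ (τ (z + 1))) - Vn (ξ (τ z))) / (τ (z + 1) - τ z) ≤ -α₄ (Vn (ξ (τ z)))) :
    Filter.Tendsto (fun t : ℝ => ‖ξ t‖) Filter.atTop (nhds 0) :=
  stmt_1_general d ξ τ hlow hbar hhlow hgap Vn α₁ α₂ α₃ α₄ hα₁ hα₃ hα₄ hbound hii hiii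
end

section
/- Let ε ∈ ℝ, γ > 0, Λ > 0, L ∈ ℝ, and let a < b be real numbers. Let v, ω, p : ℝ → ℝ be differentiable on [a,b] and h : ℝ → ℝ with h(t) ≥ 0 on [a,b]. Suppose for all t ∈ [a,b]: v(t) ≥ 0, ω(t) ≥ 0, p(t) > 0, v'(t) ≤ −ε·v(t) − h(t)² + γ²·ω(t), ω'(t) ≤ 2·√(ω(t))·(L·√(ω(t)) + h(t)), and p'(t) = −2Λ·p(t) − γ·(p(t)² + 1). Assume additionally ω(a) = 0, and set c := max(−ε, 2(L − Λ)). Then for all t ∈ [a,b]: (a) v(t) ≤ exp(c·(t − a))·v(a), and (b) γ·p(t)·ω(t) ≤ exp(c·(t − a))·v(a). -/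
/-!
The Lyapunov-like function `U = v + γ p ω` satisfies `U' ≤ c U` on `[a, b]`: substituting the
three differential inequalities, the cross term `2 γ p √ω h` is absorbed by completing the square,
`U' ≤ -ε v + 2 (L - Λ) γ p ω - (h - γ p √ω)²`. Grönwall then gives `U t ≤ exp (c (t - a)) U a`,
and `U a = v a` because `ω a = 0`.
-/

open Set Real

theorem le_exp_mul_of_hasDerivWithinAt_le_mul {f f' : ℝ → ℝ} {a b c : ℝ}
    (hf : ∀ t ∈ Icc a b, HasDerivWithinAt f (f' t) (Icc a b) t)
    (hbound : ∀ t ∈ Icc a b, f' t ≤ c * f t) :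
    ∀ t ∈ Icc a b, f t ≤ exp (c * (t - a)) * f a := by
  intro t ht
  have hcont : ContinuousOn f (Icc a b) := fun s hs => (hf s hs).continuousWithinAt
  have hright : ∀ s ∈ Ico a b, HasDerivWithinAt f (f' s) (Ici s) s := fun s hs =>
    (hf s (Ico_subset_Icc_self hs)).mono_of_mem_nhdsWithin (Icc_mem_nhdsGE_of_mem hs)
  have := le_gronwallBound_of_liminf_deriv_right_le hcont
    (fun s hs _ hr => (hright s hs).liminf_right_slope_le hr) le_rfl
    (fun s hs => by rw [add_zero]; exact hbound s (Ico_subset_Icc_self hs)) t ht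
  rwa [gronwallBound_ε0, mul_comm] at this

theorem lyapunov_deriv_le {ε L Λ γ v ω p h v' ω' p' : ℝ} (hγ : 0 ≤ γ)
    (hv : 0 ≤ v) (hω : 0 ≤ ω) (hp : 0 ≤ p)
    (hv' : v' ≤ -ε * v - h ^ 2 + γ ^ 2 * ω)
    (hω' : ω' ≤ 2 * √ω * (L * √ω + h))
    (hp' : p' = -2 * Λ * p - γ * (p ^ 2 + 1)) :
    v' + γ * (p' * ω + p * ω') ≤ max (-ε) (2 * (L - Λ)) * (v + γ * (p * ω)) := by
  have hsq : √ω ^ 2 = ω := sq_sqrt hω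
  have hγpω : 0 ≤ γ * (p * ω) := by positivity
  have hcross : γ * p * ω' ≤ γ * p * (2 * √ω * (L * √ω + h)) :=
    mul_le_mul_of_nonneg_left hω' (by positivity)
  have hcompleted : v' + γ * (p' * ω + p * ω')
      ≤ -ε * v + 2 * (L - Λ) * (γ * (p * ω)) - (h - γ * p * √ω) ^ 2 := by
    rw [hp']
    linear_combination hv' + hcross + (2 * L * γ * p + γ ^ 2 * p ^ 2) * hsq
  have hε : -ε * v ≤ max (-ε) (2 * (L - Λ)) * v :=
    mul_le_mul_of_nonneg_right (le_max_left _ _) hv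
  have hL : 2 * (L - Λ) * (γ * (p * ω)) ≤ max (-ε) (2 * (L - Λ)) * (γ * (p * ω)) :=
    mul_le_mul_of_nonneg_right (le_max_right _ _) hγpω
  linarith [sq_nonneg (h - γ * p * √ω)]

theorem stmt_5_general (ε L Λ γ a b : ℝ) (hγ : 0 < γ)
    (v ω p h v' ω' p' : ℝ → ℝ)
    (hvderiv : ∀ t ∈ Set.Icc a b, HasDerivWithinAt v (v' t) (Set.Icc a b) t)
    (hωderiv : ∀ t ∈ Set.Icc a b, HasDerivWithinAt ω (ω' t) (Set.Icc a b) t)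
    (hpderiv : ∀ t ∈ Set.Icc a b, HasDerivWithinAt p (p' t) (Set.Icc a b) t)
    (hvnn : ∀ t ∈ Set.Icc a b, 0 ≤ v t)
    (hωnn : ∀ t ∈ Set.Icc a b, 0 ≤ ω t)
    (hppos : ∀ t ∈ Set.Icc a b, 0 < p t)
    (hv' : ∀ t ∈ Set.Icc a b, v' t ≤ -ε * v t - (h t) ^ 2 + γ ^ 2 * ω t)
    (hω' : ∀ t ∈ Set.Icc a b,
      ω' t ≤ 2 * Real.sqrt (ω t) * (L * Real.sqrt (ω t) + h t))
    (hp' : ∀ t ∈ Set.Icc a b, p' t = -2 * Λ * p t - γ * (p t ^ 2 + 1))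
    (hωa : ω a = 0) :
    ∀ t ∈ Set.Icc a b,
      v t ≤ Real.exp (max (-ε) (2 * (L - Λ)) * (t - a)) * v a ∧
      γ * p t * ω t ≤ Real.exp (max (-ε) (2 * (L - Λ)) * (t - a)) * v a := by
  intro t ht
  have hU := le_exp_mul_of_hasDerivWithinAt_le_mul
    (f := fun s => v s + γ * (p s * ω s))
    (fun s hs => (hvderiv s hs).add (((hpderiv s hs).mul (hωderiv s hs)).const_mul γ))
    (fun s hs => lyapunov_deriv_le hγ.le (hvnn s hs) (hωnn s hs) (hppos s hs).le
      (hv' s hs) (hω' s hs) (hp' s hs)) t ht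
  simp only [hωa, mul_zero, add_zero] at hU
  have hγpω : 0 ≤ γ * p t * ω t := by
    have := hppos t ht; have := hωnn t ht; positivity
  have hvt := hvnn t ht
  constructor <;> linarith

/-- Trajectory-level content of Proposition 2, conclusions (16)–(18). -/
theorem stmt_5 (ε L Λ γ a b : ℝ) (hγ : 0 < γ) (hΛ : 0 < Λ) (hab : a < b)
    (v ω p h v' ω' p' : ℝ → ℝ)
    (hvderiv : ∀ t ∈ Set.Icc a b, HasDerivWithinAt v (v' t) (Set.Icc a b) t)
    (hωderiv : ∀ t ∈ Set.Icc a b, HasDerivWithinAt ω (ω' t) (Set.Icc a b) t)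
    (hpderiv : ∀ t ∈ Set.Icc a b, HasDerivWithinAt p (p' t) (Set.Icc a b) t)
    (hhnn : ∀ t ∈ Set.Icc a b, 0 ≤ h t)
    (hvnn : ∀ t ∈ Set.Icc a b, 0 ≤ v t)
    (hωnn : ∀ t ∈ Set.Icc a b, 0 ≤ ω t)
    (hppos : ∀ t ∈ Set.Icc a b, 0 < p t)
    (hv' : ∀ t ∈ Set.Icc a b, v' t ≤ -ε * v t - (h t) ^ 2 + γ ^ 2 * ω t)
    (hω' : ∀ t ∈ Set.Icc a b,
      ω' t ≤ 2 * Real.sqrt (ω t) * (L * Real.sqrt (ω t) + h t))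
    (hp' : ∀ t ∈ Set.Icc a b, p' t = -2 * Λ * p t - γ * (p t ^ 2 + 1))
    (hωa : ω a = 0) :
    ∀ t ∈ Set.Icc a b,
      v t ≤ Real.exp (max (-ε) (2 * (L - Λ)) * (t - a)) * v a ∧
      γ * p t * ω t ≤ Real.exp (max (-ε) (2 * (L - Λ)) * (t - a)) * v a :=
  stmt_5_general ε L Λ γ a b hγ v ω p h v' ω' p' hvderiv hωderiv hpderiv hvnn hωnn hppos hv' hω' hp'
    hωa
end
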